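/- Let A ∈ ℝ^{n×d}, let 1 ≤ p < ∞, and let C ≥ 1. Then there exist an integer m ≤ (1 + 1/C)·n and a matrix A' ∈ ℝ^{m×d}, each of whose rows is a nonnegative scalar multiple of some row of A, such that: (i) ‖A'x‖_p = ‖Ax‖_p for every x ∈ ℝ^d; (ii) 𝔖^p(A') = 𝔖^p(A); and (iii) σ_{i'}^p(A') ≤ C·𝔖^p(A)/n for every i' ∈ [m]. -/

import Mathlib

open MeasureTheory Matrix Finset

/-- The `i`-th ℓ_p sensitivity of a matrix `A`:
`σ_i^p(A) = sup { |(Ax)_i|^p / ‖Ax‖_p^p : Ax ≠ 0 }` (zero if the set is empty). -/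
noncomputable def lpSens (p : ℝ) {R C : Type*} [Fintype R] [Fintype C]
    (A : Matrix R C ℝ) (i : R) : ℝ :=
  sSup {r : ℝ | ∃ x : C → ℝ, A.mulVec x ≠ 0 ∧
    r = |A.mulVec x i| ^ p / ∑ j, |A.mulVec x j| ^ p}

/-- The total ℓ_p sensitivity `𝔖^p(A) = Σ_i σ_i^p(A)`. -/
noncomputable def totalSens (p : ℝ) {R C : Type*} [Fintype R] [Fintype C]
    (A : Matrix R C ℝ) : ℝ := ∑ i, lpSens p A i

/-- The entrywise ℓ_p norm of a vector. -/
noncomputable def lpNorm (p : ℝ) {m : Type*} [Fintype m] (y : m → ℝ) : ℝ :=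
  (∑ i, |y i| ^ p) ^ (1 / p)

/-!
Split the `i`-th row of `A` into `kᵢ` copies, each scaled by `kᵢ^(-1/p)`. Every copy carries a
`1/kᵢ` share of `|(Ax)ᵢ|^p`, so `‖·x‖_p` is unchanged for every `x`, and the sensitivity of each
copy is `σᵢ/kᵢ`. Taking `kᵢ = max 1 ⌈n σᵢ / (C 𝔖)⌉` makes every `σᵢ/kᵢ ≤ C 𝔖 / n`, while
`Σ kᵢ ≤ Σ (1 + n σᵢ / (C 𝔖)) = n + n / C`.
-/

variable {R R' C : Type*} [Fintype C] {p : ℝ}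

section Sensitivity

variable [Fintype R] [Fintype R']

lemma sum_abs_rpow_eq_zero_iff (hp : p ≠ 0) (y : R → ℝ) :
    ∑ i, |y i| ^ p = 0 ↔ y = 0 := by
  simp only [Finset.sum_eq_zero_iff_of_nonneg fun i _ => Real.rpow_nonneg (abs_nonneg (y i)) p,
    Finset.mem_univ, true_implies, Real.rpow_eq_zero (abs_nonneg _) hp, abs_eq_zero, funext_iff,
    Pi.zero_apply]

lemma lpSens_nonneg (A : Matrix R C ℝ) (i : R) : 0 ≤ lpSens p A i := by
  apply Real.sSup_nonneg
  rintro r ⟨x, -, rfl⟩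
  positivity

lemma lpSens_le_totalSens (A : Matrix R C ℝ) (i : R) : lpSens p A i ≤ totalSens p A :=
  Finset.single_le_sum (fun j _ => lpSens_nonneg A j) (Finset.mem_univ i)

lemma totalSens_nonneg (A : Matrix R C ℝ) : 0 ≤ totalSens p A :=
  Finset.sum_nonneg fun i _ => lpSens_nonneg A i

/-- Sensitivities depend only on the row masses `|(Ax)ᵢ|^p`. -/
lemma lpSens_eq_div_of_rowMass (hp : p ≠ 0) {A : Matrix R C ℝ} {B : Matrix R' C ℝ}
    {i : R} {b : R'} {w : ℝ} (hw : 0 ≤ w)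
    (hsum : ∀ x, ∑ j, |(B *ᵥ x) j| ^ p = ∑ j, |(A *ᵥ x) j| ^ p)
    (hrow : ∀ x, |(B *ᵥ x) b| ^ p = |(A *ᵥ x) i| ^ p / w) :
    lpSens p B b = lpSens p A i / w := by
  have hzero : ∀ x, B *ᵥ x = 0 ↔ A *ᵥ x = 0 := fun x => by
    rw [← sum_abs_rpow_eq_zero_iff hp, hsum, sum_abs_rpow_eq_zero_iff hp]
  open scoped Pointwise in
  have hset : {r : ℝ | ∃ x, B *ᵥ x ≠ 0 ∧ r = |(B *ᵥ x) b| ^ p / ∑ j, |(B *ᵥ x) j| ^ p} =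
      w⁻¹ • {r : ℝ | ∃ x, A *ᵥ x ≠ 0 ∧ r = |(A *ᵥ x) i| ^ p / ∑ j, |(A *ᵥ x) j| ^ p} := by
    ext r
    simp only [Set.mem_smul_set, Set.mem_ofPred_eq, smul_eq_mul, ne_eq, hzero, hrow, hsum]
    constructor
    · rintro ⟨x, hx, rfl⟩
      exact ⟨_, ⟨x, hx, rfl⟩, by ring⟩
    · rintro ⟨_, ⟨x, hx, rfl⟩, rfl⟩
      exact ⟨x, hx, by ring⟩
  rw [lpSens, hset, Real.sSup_smul_of_nonneg (inv_nonneg.mpr hw), smul_eq_mul, ← lpSens,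
    inv_mul_eq_div]

end Sensitivity

section Reindex

variable [Fintype R] [Fintype R'] (A : Matrix R C ℝ) (e : R' ≃ R)

lemma sum_abs_submatrix_mulVec_rpow (x : C → ℝ) :
    ∑ j, |(A.submatrix e id *ᵥ x) j| ^ p = ∑ j, |(A *ᵥ x) j| ^ p :=
  e.sum_comp fun j => |(A *ᵥ x) j| ^ p

lemma lpSens_submatrix (hp : p ≠ 0) (i : R') :
    lpSens p (A.submatrix e id) i = lpSens p A (e i) := by
  simpa using lpSens_eq_div_of_rowMass (w := 1) hp zero_le_one
    (sum_abs_submatrix_mulVec_rpow A e) (fun x => (div_one _).symm)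

lemma totalSens_submatrix (hp : p ≠ 0) : totalSens p (A.submatrix e id) = totalSens p A := by
  simp only [totalSens, lpSens_submatrix A e hp]
  exact e.sum_comp (lpSens p A)

end Reindex

section Split

variable {k : R → ℕ}

variable (p) in
noncomputable def splitRows (A : Matrix R C ℝ) (k : R → ℕ) : Matrix (Σ i, Fin (k i)) C ℝ :=
  Matrix.of fun b j => ((k b.1 : ℝ) ^ (1 / p))⁻¹ * A b.1 j

variable (A : Matrix R C ℝ)

lemma abs_splitRows_mulVec_rpow (hp : p ≠ 0) (x : C → ℝ) (b : Σ i, Fin (k i)) :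
    |(splitRows p A k *ᵥ x) b| ^ p = |(A *ᵥ x) b.1| ^ p / k b.1 := by
  have hmul : (splitRows p A k *ᵥ x) b = ((k b.1 : ℝ) ^ (1 / p))⁻¹ * (A *ᵥ x) b.1 := by
    simp only [splitRows, mulVec, dotProduct, of_apply, mul_assoc, Finset.mul_sum]
  have hk : (0 : ℝ) ≤ k b.1 := Nat.cast_nonneg _
  rw [hmul, abs_mul, abs_of_nonneg (by positivity), Real.mul_rpow (by positivity) (abs_nonneg _),
    Real.inv_rpow (by positivity), ← Real.rpow_mul hk, one_div_mul_cancel hp, Real.rpow_one,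
    inv_mul_eq_div]

variable [Fintype R]

lemma sum_sigma_div_of_ne_zero (hk : ∀ i, k i ≠ 0) (f : R → ℝ) :
    ∑ b : Σ i, Fin (k i), f b.1 / k b.1 = ∑ i, f i := by
  rw [Fintype.sum_sigma]
  dsimp only
  refine Finset.sum_congr rfl fun i _ => ?_
  rw [Finset.sum_const, Finset.card_univ, Fintype.card_fin, nsmul_eq_mul,
    mul_div_cancel₀ _ (Nat.cast_ne_zero.mpr (hk i))]

lemma sum_abs_splitRows_mulVec_rpow (hp : p ≠ 0) (hk : ∀ i, k i ≠ 0) (x : C → ℝ) :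
    ∑ b, |(splitRows p A k *ᵥ x) b| ^ p = ∑ i, |(A *ᵥ x) i| ^ p := by
  simp only [abs_splitRows_mulVec_rpow A hp]
  exact sum_sigma_div_of_ne_zero hk fun i => |(A *ᵥ x) i| ^ p

lemma lpSens_splitRows (hp : p ≠ 0) (hk : ∀ i, k i ≠ 0) (b : Σ i, Fin (k i)) :
    lpSens p (splitRows p A k) b = lpSens p A b.1 / k b.1 :=
  lpSens_eq_div_of_rowMass hp (Nat.cast_nonneg _) (sum_abs_splitRows_mulVec_rpow A hp hk)
    (fun x => abs_splitRows_mulVec_rpow A hp x b)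

lemma totalSens_splitRows (hp : p ≠ 0) (hk : ∀ i, k i ≠ 0) :
    totalSens p (splitRows p A k) = totalSens p A := by
  simp only [totalSens, lpSens_splitRows A hp hk]
  exact sum_sigma_div_of_ne_zero hk _

end Split

section Multiplicity

variable [Fintype R]

variable (p) in
/-- If `𝔖 = 0` the division is junk (`x / 0 = 0`) and every row is kept once. -/
noncomputable def flatteningMultiplicity (c : ℝ) (A : Matrix R C ℝ) (i : R) : ℕ :=
  max 1 ⌈Fintype.card R * lpSens p A i / (c * totalSens p A)⌉₊

variable {c : ℝ} (A : Matrix R C ℝ)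

lemma flatteningMultiplicity_ne_zero (i : R) : flatteningMultiplicity p c A i ≠ 0 :=
  Nat.one_le_iff_ne_zero.mp (le_max_left _ _)

lemma lpSens_div_flatteningMultiplicity_le (hc : 0 < c) (i : R) :
    lpSens p A i / flatteningMultiplicity p c A i ≤ c * totalSens p A / Fintype.card R := by
  set S := totalSens p A
  set n : ℝ := (Fintype.card R : ℝ)
  have hσ := lpSens_nonneg (p := p) A i
  rcases (totalSens_nonneg A : 0 ≤ S).eq_or_lt with hS | hS
  · have : lpSens p A i = 0 := le_antisymm (hS ▸ lpSens_le_totalSens A i) hσ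
    rw [this, zero_div]
    exact div_nonneg (mul_nonneg hc.le hS.le) (Nat.cast_nonneg _)
  have hn : 0 < n := Nat.cast_pos.mpr (Fintype.card_pos_iff.mpr ⟨i⟩)
  have hk : (0 : ℝ) < flatteningMultiplicity p c A i :=
    Nat.cast_pos.mpr (Nat.pos_of_ne_zero (flatteningMultiplicity_ne_zero A i))
  rw [div_le_iff₀ hk]
  have hS0 : S ≠ 0 := hS.ne'
  calc lpSens p A i = c * S / n * (n * lpSens p A i / (c * S)) := by field_simp
    _ ≤ c * S / n * ⌈n * lpSens p A i / (c * S)⌉₊ := by gcongr; exact Nat.le_ceil _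
    _ ≤ c * S / n * flatteningMultiplicity p c A i := by
      gcongr; exact_mod_cast le_max_right _ _

lemma sum_flatteningMultiplicity_le (hc : 0 < c) :
    ∑ i, (flatteningMultiplicity p c A i : ℝ) ≤ (1 + 1 / c) * Fintype.card R := by
  set S := totalSens p A
  set n : ℝ := (Fintype.card R : ℝ)
  have hk : ∀ i, (flatteningMultiplicity p c A i : ℝ) ≤ 1 + n * lpSens p A i / (c * S) := by
    intro i
    have ht : 0 ≤ n * lpSens p A i / (c * S) := by
      have := lpSens_nonneg (p := p) A i
      have := totalSens_nonneg (p := p) A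
      positivity
    rw [flatteningMultiplicity, Nat.cast_max, Nat.cast_one, max_le_iff]
    exact ⟨by linarith, by linarith [Nat.ceil_lt_add_one ht]⟩
  calc ∑ i, (flatteningMultiplicity p c A i : ℝ)
      ≤ ∑ i, (1 + n * lpSens p A i / (c * S)) := Finset.sum_le_sum fun i _ => hk i
    _ = n + n / c * (S / S) := by
      rw [Finset.sum_add_distrib, ← Finset.sum_div, ← Finset.mul_sum]
      simp only [Finset.sum_const, Finset.card_univ, nsmul_eq_mul, mul_one]
      rw [mul_div_mul_comm]; rfl
    _ ≤ n + n / c * 1 := by gcongr; exact div_self_le_one S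
    _ = (1 + 1 / c) * n := by ring

end Multiplicity

/-- **ℓ_p sensitivity flattening**: every matrix can be replaced by an `ℓ_p`-isometric
matrix with at most `(1 + 1/C)·n` rows, each a nonnegative multiple of a row of `A`,
whose `ℓ_p` sensitivities are all at most `C·𝔖^p(A)/n`, with the same total sensitivity. -/
theorem lp_sensitivity_flattening
    (n d : ℕ) (A : Matrix (Fin n) (Fin d) ℝ) (p C : ℝ) (hp : 1 ≤ p) (hC : 1 ≤ C) :
    ∃ (m : ℕ) (A' : Matrix (Fin m) (Fin d) ℝ),
      (m : ℝ) ≤ (1 + 1 / C) * n ∧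
      (∀ i' : Fin m, ∃ (i : Fin n) (c : ℝ), 0 ≤ c ∧ ∀ j, A' i' j = c * A i j) ∧
      (∀ x : Fin d → ℝ, lpNorm p (A'.mulVec x) = lpNorm p (A.mulVec x)) ∧
      totalSens p A' = totalSens p A ∧
      ∀ i' : Fin m, lpSens p A' i' ≤ C * totalSens p A / n := by
  have hp0 : p ≠ 0 := by positivity
  have hC0 : 0 < C := by positivity
  set k := flatteningMultiplicity p C A
  have hk : ∀ i, k i ≠ 0 := flatteningMultiplicity_ne_zero A
  set e : (Σ i, Fin (k i)) ≃ Fin (∑ i, k i) := finSigmaFinEquiv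
  refine ⟨∑ i, k i, (splitRows p A k).submatrix e.symm id, ?_, fun i' => ?_, fun x => ?_, ?_,
    fun i' => ?_⟩
  · simpa using sum_flatteningMultiplicity_le A hC0
  · exact ⟨(e.symm i').1, _, by positivity, fun j => rfl⟩
  · rw [_root_.lpNorm, _root_.lpNorm, sum_abs_submatrix_mulVec_rpow,
      sum_abs_splitRows_mulVec_rpow A hp0 hk]
  · rw [totalSens_submatrix _ _ hp0, totalSens_splitRows A hp0 hk]
  · rw [lpSens_submatrix _ _ hp0, lpSens_splitRows A hp0 hk]
    simpa using lpSens_div_flatteningMultiplicity_le A hC0 (e.symm i').1
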